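/- Let (M, ω, J) be an almost Kähler manifold and Z a symplectic vector field (L_Z ω = 0). Then for all vector fields X, Y: g(D_X Z, Y) + g(X, D_Y Z) = g(JX, (L_Z J) Y), where D is the Levi-Civita connection of g(·,·) = ω(·, J·). -/
import Mathlib


/-- Let `(M, ω, J)` be almost Kähler and `Z` a symplectic vector
field (`L_Z ω = 0`).  Then for all vector fields `X, Y`:
`g(D_X Z, Y) + g(X, D_Y Z) = g(JX, (L_Z J) Y)`, where `D` is the Levi-Civita
connection of `g(·,·) = ω(·, J·)`.  Here `(L_Z J)Y = ⁅Z, JY⁆ − J⁅Z, Y⁆`,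
`hmetric` is metric compatibility of `D`, `htors` torsion-freeness, and `hLZω`
expresses `L_Z ω = 0`. -/
theorem symplectic_field_metric_identity
    {A V : Type*} [CommRing A] [Algebra ℝ A]
    [LieRing V] [LieAlgebra ℝ V]
    (act : V →ₗ[ℝ] A →ₗ[ℝ] A)
    (J : V →ₗ[ℝ] V) (hJ2 : ∀ X, J (J X) = -X)
    (ω : V →ₗ[ℝ] V →ₗ[ℝ] A)
    (hωskew : ∀ X Y, ω X Y = - ω Y X)
    (hωJ : ∀ X Y, ω (J X) (J Y) = ω X Y)
    (g : V →ₗ[ℝ] V →ₗ[ℝ] A) (hg : ∀ X Y, g X Y = ω X (J Y))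
    (D : V →ₗ[ℝ] V →ₗ[ℝ] V)
    (hmetric : ∀ X Y Z, act X (g Y Z) = g (D X Y) Z + g Y (D X Z))
    (htors : ∀ X Y, D X Y - D Y X = ⁅X, Y⁆)
    (Z : V)
    (hLZω : ∀ X Y, act Z (ω X Y) = ω ⁅Z, X⁆ Y + ω X ⁅Z, Y⁆) :
    ∀ X Y, g (D X Z) Y + g X (D Y Z) = g (J X) (⁅Z, J Y⁆ - J ⁅Z, Y⁆) := by
  intro X Y
  have hDX := eq_add_of_sub_eq (htors Z X)
  have hDY := eq_add_of_sub_eq (htors Z Y)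
  have h1 := hmetric Z X Y
  rw [hDX, hDY] at h1
  have h2 := hLZω X (J Y)
  simp only [hg, map_add, map_sub, LinearMap.add_apply, LinearMap.sub_apply] at h1 h2 ⊢
  rw [hωJ]
  linear_combination h2 - h1 + hωJ X (J ⁅Z, Y⁆)
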